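/- arXiv:1101.5186 — 4 statements merged into one kernel-verified Lean document; each statement's English description precedes it below -/
import Mathlib

section
/- With notation as in the context: the set A is a subgroup of the semidirect product Ω^m ⋊ L. -/
open MulAction

section DeltaAction

variable {Λ L : Type} [Group L] [MulAction L Λ] (K : Subgroup L) [K.Normal]

/-- The action of `L` on the set `Δ` of orbits of a normal subgroup `K` on `Λ`. -/
def deltaSmul (g : L) (q : orbitRel.Quotient K Λ) : orbitRel.Quotient K Λ :=
  Quotient.map' (fun x => g • x) (by
    rintro a b ⟨k, hk⟩
    refine ⟨⟨g * k * g⁻¹, Subgroup.Normal.conj_mem ‹K.Normal› (k : L) k.2 g⟩, ?_⟩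
    show (g * (k : L) * g⁻¹) • (g • b) = g • a
    have hk' : (k : L) • b = a := hk
    rw [← hk', smul_smul, smul_smul]
    congr 1
    group) q

lemma deltaSmul_mk (g : L) (a : Λ) :
    deltaSmul K g (Quotient.mk'' a) = (Quotient.mk'' (g • a) : orbitRel.Quotient K Λ) := rfl

/-- `L` acts on the set of orbits of a normal subgroup `K`. -/
instance deltaAction : MulAction L (orbitRel.Quotient K Λ) where
  smul := deltaSmul K
  one_smul q := Quotient.inductionOn' q fun a => by
    show deltaSmul K 1 (Quotient.mk'' a) = Quotient.mk'' a
    rw [deltaSmul_mk, one_smul]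
  mul_smul g h q := Quotient.inductionOn' q fun a => by
    show deltaSmul K (g * h) (Quotient.mk'' a) = deltaSmul K g (deltaSmul K h (Quotient.mk'' a))
    rw [deltaSmul_mk, deltaSmul_mk, deltaSmul_mk, mul_smul]

end DeltaAction

section Ctx

variable (Λ L : Type) [Group L] [MulAction L Λ] (K : Subgroup L) [K.Normal]

/-- The homomorphism from `L` to the symmetric group of the orbit set `Δ`. -/
def rhoHom : L →* Equiv.Perm (orbitRel.Quotient K Λ) :=
  MulAction.toPermHom L (orbitRel.Quotient K Λ)

/-- `S`, the permutation group induced by `L` on the orbit set `Δ`. -/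
def Sgrp : Subgroup (Equiv.Perm (orbitRel.Quotient K Λ)) := (rhoHom Λ L K).range

/-- The natural projection `π : L → S`. -/
def piHom : L →* ↥(Sgrp Λ L K) := (rhoHom Λ L K).rangeRestrict

variable (lam : Λ)

/-- The orbit `δ ∈ Δ` of the point `λ`. -/
def deltaPt : orbitRel.Quotient K Λ := Quotient.mk'' lam

/-- The stabiliser `S_δ` of `δ` in `S`. -/
def Sdel : Subgroup ↥(Sgrp Λ L K) := stabilizer ↥(Sgrp Λ L K) (deltaPt Λ L K lam)

/-- The point stabiliser `L_λ`. -/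
def Llam : Subgroup L := stabilizer L lam

/-- `K_λ`, the stabiliser of `λ` in `K`. -/
def Klam : Subgroup L := K ⊓ stabilizer L lam

end Ctx

section Wr

variable {G H : Type*} [Group G] [Group H]

/-- The underlying type of the twisted product `(H → G)^m ⋊ G` used in the construction:
elements are tuples `(g, f₁, …, f_m)` with `g ∈ G` and `f_i : H → G`, multiplied by
`(g, f₁, …, f_m)(g', h₁, …, h_m) = (g g', f₁^{g'} h₁, …, f_m^{g'} h_m)`, where
`f^{g'}(x) = f(x · (p g')⁻¹)`. -/
@[ext]
structure Wr (p : G →* H) (m : ℕ) where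
  fst : G
  snd : Fin m → H → G

namespace Wr

variable {p : G →* H} {m : ℕ}

instance : One (Wr p m) := ⟨⟨1, fun _ _ => 1⟩⟩
instance : Mul (Wr p m) :=
  ⟨fun a b => ⟨a.fst * b.fst, fun i x => a.snd i (x * (p b.fst)⁻¹) * b.snd i x⟩⟩
instance : Inv (Wr p m) := ⟨fun a => ⟨a.fst⁻¹, fun i x => (a.snd i (x * p a.fst))⁻¹⟩⟩

@[simp] lemma one_fst : (1 : Wr p m).fst = 1 := rfl
@[simp] lemma one_snd (i : Fin m) (x : H) : (1 : Wr p m).snd i x = 1 := rfl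
@[simp] lemma mul_fst (a b : Wr p m) : (a * b).fst = a.fst * b.fst := rfl
@[simp] lemma mul_snd (a b : Wr p m) (i : Fin m) (x : H) :
    (a * b).snd i x = a.snd i (x * (p b.fst)⁻¹) * b.snd i x := rfl
@[simp] lemma inv_fst (a : Wr p m) : (a⁻¹).fst = a.fst⁻¹ := rfl
@[simp] lemma inv_snd (a : Wr p m) (i : Fin m) (x : H) :
    (a⁻¹).snd i x = (a.snd i (x * p a.fst))⁻¹ := rfl

instance : Group (Wr p m) where
  mul_assoc a b c := by
    refine Wr.ext (mul_assoc ..) ?_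
    funext i x
    simp [mul_assoc]
  one_mul a := by
    refine Wr.ext (one_mul _) ?_
    funext i x
    simp
  mul_one a := by
    refine Wr.ext (mul_one _) ?_
    funext i x
    simp
  inv_mul_cancel a := by
    refine Wr.ext (inv_mul_cancel _) ?_
    funext i x
    simp

end Wr

end Wr

/-- The projection `(g, f₁, …, f_m) ↦ g`. -/
def Wr.fstHom {G H : Type*} [Group G] [Group H] (p : G →* H) (m : ℕ) : Wr p m →* G where
  toFun := Wr.fst
  map_one' := rfl
  map_mul' := fun _ _ => rfl

section ASubgroup

open MulAction

variable (Λ L : Type) [Fintype Λ] [Group L] [Finite L] [MulAction L Λ]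
  (K : Subgroup L) [K.Normal] (lam : Λ)
  (τ : ↥(Sgrp Λ L K) → ↥(Sgrp Λ L K)) (m : ℕ)

/-- The subgroup `Ω^m ⋊ L` inside the twisted product: the tuples `(g, f₁, …, f_m)` where
each `f_i` lies in `Ω`, i.e. takes values in `L_λ` and is constant on the right cosets of
`S_δ` in `S`. -/
def OmegaML : Subgroup (Wr (piHom Λ L K) m) where
  carrier := {w | ∀ i, (∀ x, w.snd i x ∈ stabilizer L lam) ∧
    ∀ y ∈ Sdel Λ L K lam, ∀ x, w.snd i (y * x) = w.snd i x}
  one_mem' := fun i => ⟨fun x => Subgroup.one_mem _, fun y hy x => rfl⟩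
  mul_mem' := by
    rintro a b ha hb
    refine fun i => ⟨fun x => ?_, fun y hy x => ?_⟩
    · simp only [Wr.mul_snd]
      exact mul_mem ((ha i).1 _) ((hb i).1 x)
    · simp only [Wr.mul_snd]
      rw [mul_assoc, (ha i).2 y hy, (hb i).2 y hy]
  inv_mem' := by
    rintro a ha
    refine fun i => ⟨fun x => ?_, fun y hy x => ?_⟩
    · simp only [Wr.inv_snd]
      exact inv_mem ((ha i).1 _)
    · simp only [Wr.inv_snd]
      rw [mul_assoc, (ha i).2 y hy]

/-- The set `A`: tuples `(g, f₁, …, f_m)` with `g ∈ L`, each `f_i ∈ Ω`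
(i.e. `f_i` takes values in `L_λ` and is constant on right cosets of `S_δ`), and
`(f_i(x))^π = (x (g^π)⁻¹)^τ · g^π · (x^τ)⁻¹` for all `x ∈ S`. -/
def Aset : Set (Wr (piHom Λ L K) m) :=
  {w | (∀ i x, w.snd i x ∈ stabilizer L lam) ∧
    (∀ i, ∀ y ∈ Sdel Λ L K lam, ∀ x, w.snd i (y * x) = w.snd i x) ∧
    (∀ i x, piHom Λ L K (w.snd i x) =
      τ (x * (piHom Λ L K w.fst)⁻¹) * piHom Λ L K w.fst * (τ x)⁻¹)}

/-- `A` as a subgroup of `Ω^m ⋊ L`. -/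
def Asub : Subgroup (Wr (piHom Λ L K) m) where
  carrier := Aset Λ L K lam τ m
  one_mem' := by
    refine ⟨fun i x => ?_, fun i y hy x => rfl, fun i x => ?_⟩
    · simp only [Wr.one_snd]
      exact Subgroup.one_mem _
    · simp
  mul_mem' := by
    rintro a b ⟨ha1, ha2, ha3⟩ ⟨hb1, hb2, hb3⟩
    refine ⟨fun i x => ?_, fun i y hy x => ?_, fun i x => ?_⟩
    · simp only [Wr.mul_snd]
      exact mul_mem (ha1 i _) (hb1 i x)
    · simp only [Wr.mul_snd]
      rw [mul_assoc, ha2 i y hy, hb2 i y hy]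
    · simp only [Wr.mul_snd, Wr.mul_fst, map_mul]
      rw [ha3 i, hb3 i,
        show x * (piHom Λ L K a.fst * piHom Λ L K b.fst)⁻¹ =
          x * (piHom Λ L K b.fst)⁻¹ * (piHom Λ L K a.fst)⁻¹ from by
            rw [mul_inv_rev, ← mul_assoc]]
      group
  inv_mem' := by
    rintro a ⟨h1, h2, h3⟩
    refine ⟨fun i x => ?_, fun i y hy x => ?_, fun i x => ?_⟩
    · simp only [Wr.inv_snd]
      exact inv_mem (h1 i _)
    · simp only [Wr.inv_snd]
      rw [mul_assoc, h2 i y hy]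
    · simp only [Wr.inv_snd, Wr.inv_fst, map_inv]
      rw [h3 i (x * piHom Λ L K a.fst), mul_inv_cancel_right, inv_inv]
      group

/-- The subgroup `C = {(g, f₁, …, f_m) ∈ A | g ∈ L_λ}` of `A`. -/
def Csub : Subgroup (Wr (piHom Λ L K) m) :=
  Asub Λ L K lam τ m ⊓ Subgroup.comap (Wr.fstHom (piHom Λ L K) m) (stabilizer L lam)

end ASubgroup

theorem Aset_subset_OmegaML (Λ L : Type) [Group L] [MulAction L Λ] (K : Subgroup L) [K.Normal]
    (lam : Λ) (τ : ↥(Sgrp Λ L K) → ↥(Sgrp Λ L K)) (m : ℕ) :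
    Aset Λ L K lam τ m ⊆ (OmegaML Λ L K lam m : Set (Wr (piHom Λ L K) m)) :=
  fun _ ⟨hstab, hconst, _⟩ i => ⟨hstab i, hconst i⟩

theorem Aset_is_subgroup_general (Λ L : Type) [Group L] [MulAction L Λ]
    (K : Subgroup L) [K.Normal] (lam : Λ)
    (τ : ↥(Sgrp Λ L K) → ↥(Sgrp Λ L K))
    (m : ℕ) :
    (Aset Λ L K lam τ m ⊆ (OmegaML Λ L K lam m : Set (Wr (piHom Λ L K) m))) ∧
    (1 : Wr (piHom Λ L K) m) ∈ Aset Λ L K lam τ m ∧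
    (∀ a ∈ Aset Λ L K lam τ m, ∀ b ∈ Aset Λ L K lam τ m, a * b ∈ Aset Λ L K lam τ m) ∧
    (∀ a ∈ Aset Λ L K lam τ m, a⁻¹ ∈ Aset Λ L K lam τ m) :=
  ⟨Aset_subset_OmegaML Λ L K lam τ m, (Asub Λ L K lam τ m).one_mem,
    fun _ ha _ hb => (Asub Λ L K lam τ m).mul_mem ha hb,
    fun _ ha => (Asub Λ L K lam τ m).inv_mem ha⟩

/-- **Lemma.** With notation as in the construction, the set `A` is a subgroup of the
semidirect product `Ω^m ⋊ L`: it is contained in `Ω^m ⋊ L`, contains the identity, and is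
closed under multiplication and inverses. -/
theorem Aset_is_subgroup (Λ L : Type) [Fintype Λ] [Group L] [Finite L] [MulAction L Λ]
    [FaithfulSMul L Λ] [MulAction.IsPretransitive L Λ]
    (K : Subgroup L) [K.Normal] (hKint : ¬ MulAction.IsPretransitive ↥K Λ)
    (hker : (rhoHom Λ L K).ker = K) (lam : Λ)
    (T : Set ↥(Sgrp Λ L K)) (h1T : (1 : ↥(Sgrp Λ L K)) ∈ T)
    (τ : ↥(Sgrp Λ L K) → ↥(Sgrp Λ L K))
    (hτT : ∀ s, τ s ∈ T) (hτcoset : ∀ s, s * (τ s)⁻¹ ∈ Sdel Λ L K lam)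
    (hτuniq : ∀ s t, t ∈ T → s * t⁻¹ ∈ Sdel Λ L K lam → t = τ s)
    (m : ℕ) (hm : Odd m) :
    (Aset Λ L K lam τ m ⊆ (OmegaML Λ L K lam m : Set (Wr (piHom Λ L K) m))) ∧
    (1 : Wr (piHom Λ L K) m) ∈ Aset Λ L K lam τ m ∧
    (∀ a ∈ Aset Λ L K lam τ m, ∀ b ∈ Aset Λ L K lam τ m, a * b ∈ Aset Λ L K lam τ m) ∧
    (∀ a ∈ Aset Λ L K lam τ m, a⁻¹ ∈ Aset Λ L K lam τ m) :=
  Aset_is_subgroup_general Λ L K lam τ m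
end

section
/- With notation as in the context: the map φ : A → L given by (g,f_1,…,f_m)^φ = g is a surjective group homomorphism. -/
open MulAction

/-! Given `g ∈ L`, the element `(x (g^π)⁻¹)^τ · g^π · (x^τ)⁻¹` lies in `S_δ` because `τ` picks
coset representatives, so it lifts to `L_λ`, as `K` acts trivially on `Δ`. Taking every `f_i(x)`
to be that lift gives a preimage of `g` in `A`; the `f_i` are constant on right cosets of `S_δ`
because `τ` is. -/

section Transversal

variable {G : Type*} [Group G] {H : Subgroup G} {T : Set G} {τ : G → G}

theorem transversal_mul_left_eq (hτT : ∀ s, τ s ∈ T) (hτcoset : ∀ s, s * (τ s)⁻¹ ∈ H)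
    (hτuniq : ∀ s t, t ∈ T → s * t⁻¹ ∈ H → t = τ s) {y : G} (hy : y ∈ H) (x : G) :
    τ (y * x) = τ x :=
  (hτuniq (y * x) (τ x) (hτT x) (by simpa only [mul_assoc] using mul_mem hy (hτcoset x))).symm

theorem transversal_cocycle_mem (hτcoset : ∀ s, s * (τ s)⁻¹ ∈ H) (x g : G) :
    τ (x * g⁻¹) * g * (τ x)⁻¹ ∈ H := by
  have h := mul_mem (inv_mem (hτcoset (x * g⁻¹))) (hτcoset x)
  rwa [show (x * g⁻¹ * (τ (x * g⁻¹))⁻¹)⁻¹ * (x * (τ x)⁻¹) = τ (x * g⁻¹) * g * (τ x)⁻¹ by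
    group] at h

end Transversal

section OrbitAction

variable {Λ L : Type} [Group L] [MulAction L Λ] {K : Subgroup L} [K.Normal]

theorem smul_orbitRel_quotient_of_mem {k : L} (hk : k ∈ K) (q : orbitRel.Quotient K Λ) :
    k • q = q :=
  Quotient.inductionOn' q fun _ => Quotient.sound' ⟨⟨k, hk⟩, rfl⟩

theorem le_ker_piHom : K ≤ (piHom Λ L K).ker := fun k hk => by
  change k ∈ (rhoHom Λ L K).rangeRestrict.ker
  rw [MonoidHom.ker_rangeRestrict, MonoidHom.mem_ker]
  exact Equiv.ext (smul_orbitRel_quotient_of_mem hk)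

-- An element of `L` fixing the `K`-orbit of `λ` is corrected by an element of `K` to fix `λ`.
theorem Sdel_le_map_piHom_stabilizer (lam : Λ) :
    Sdel Λ L K lam ≤ (stabilizer L lam).map (piHom Λ L K) := by
  intro s hs
  obtain ⟨h, rfl⟩ := (rhoHom Λ L K).rangeRestrict_surjective s
  obtain ⟨k, hk⟩ : h • lam ∈ orbit K lam := Quotient.exact' (hs : h • deltaPt Λ L K lam = _)
  replace hk : (k : L) • lam = h • lam := hk
  refine ⟨(k : L)⁻¹ * h, ?_, ?_⟩
  · change ((k : L)⁻¹ * h) • lam = lam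
    rw [mul_smul, ← hk, inv_smul_smul]
  · rw [map_mul, map_inv, le_ker_piHom k.2, inv_one, one_mul]
    rfl

end OrbitAction

theorem phi_surjective_general (Λ L : Type) [Fintype Λ] [Group L] [Finite L] [MulAction L Λ]
    (K : Subgroup L) [K.Normal] (lam : Λ)
    (T : Set ↥(Sgrp Λ L K))
    (τ : ↥(Sgrp Λ L K) → ↥(Sgrp Λ L K))
    (hτT : ∀ s, τ s ∈ T) (hτcoset : ∀ s, s * (τ s)⁻¹ ∈ Sdel Λ L K lam)
    (hτuniq : ∀ s t, t ∈ T → s * t⁻¹ ∈ Sdel Λ L K lam → t = τ s)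
    (m : ℕ) :
    Function.Surjective
      ((Wr.fstHom (piHom Λ L K) m).comp (Asub Λ L K lam τ m).subtype) := by
  intro g
  set π := piHom Λ L K
  choose! lift hlift_mem hlift_eq using fun s (hs : s ∈ Sdel Λ L K lam) =>
    Sdel_le_map_piHom_stabilizer lam hs
  let value : ↥(Sgrp Λ L K) → ↥(Sgrp Λ L K) := fun x => τ (x * (π g)⁻¹) * π g * (τ x)⁻¹
  have hvalue : ∀ x, value x ∈ Sdel Λ L K lam := fun x => transversal_cocycle_mem hτcoset x (π g)
  have hτ : ∀ y ∈ Sdel Λ L K lam, ∀ x, τ (y * x) = τ x := fun y hy =>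
    transversal_mul_left_eq hτT hτcoset hτuniq hy
  have hvalue_coset : ∀ y ∈ Sdel Λ L K lam, ∀ x, value (y * x) = value x := fun y hy x => by
    simp only [value, mul_assoc y, hτ y hy]
  refine ⟨⟨⟨g, fun _ x => lift (value x)⟩, fun _ x => hlift_mem _ (hvalue x),
    fun _ y hy x => congrArg lift (hvalue_coset y hy x), fun _ x => hlift_eq _ (hvalue x)⟩, rfl⟩

/-- **Lemma.** With notation as in the construction, the map `φ : A → L`,
`(g, f₁, …, f_m) ↦ g`, is a surjective group homomorphism. -/
theorem phi_surjective (Λ L : Type) [Fintype Λ] [Group L] [Finite L] [MulAction L Λ]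
    [FaithfulSMul L Λ] [MulAction.IsPretransitive L Λ]
    (K : Subgroup L) [K.Normal] (hKint : ¬ MulAction.IsPretransitive ↥K Λ)
    (hker : (rhoHom Λ L K).ker = K) (lam : Λ)
    (T : Set ↥(Sgrp Λ L K)) (h1T : (1 : ↥(Sgrp Λ L K)) ∈ T)
    (τ : ↥(Sgrp Λ L K) → ↥(Sgrp Λ L K))
    (hτT : ∀ s, τ s ∈ T) (hτcoset : ∀ s, s * (τ s)⁻¹ ∈ Sdel Λ L K lam)
    (hτuniq : ∀ s t, t ∈ T → s * t⁻¹ ∈ Sdel Λ L K lam → t = τ s)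
    (m : ℕ) (hm : Odd m) :
    Function.Surjective
      ((Wr.fstHom (piHom Λ L K) m).comp (Asub Λ L K lam τ m).subtype) :=
  phi_surjective_general Λ L K lam T τ hτT hτcoset hτuniq m
end

section
/- Let A, B and C be finite groups with C = A ∩ B (that is, C embeds as a subgroup of both A and B, with the two copies intersecting in C inside the amalgam) and |B : C| = 2. Assume that the trivial group is the only subgroup of C that is normal both in A and in B. Then there exists a finite group Ḡ and a finite connected Ḡ-arc-transitive graph Γ such that the stabiliser Ḡ_v of a vertex v of Γ is isomorphic to A, and the action of Ḡ_v on the neighbourhood Γ(v) is permutation isomorphic to the action of A on the right cosets of C in A. -/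
/-- A pair `(Γ, G)`: a finite connected simple graph `Γ` together with a group `G` of
automorphisms of `Γ` acting transitively on the vertices. -/
structure VTPair where
  /-- the vertex set -/
  V : Type
  /-- the graph is finite -/
  fintypeV : Fintype V
  /-- the graph -/
  Γ : SimpleGraph V
  /-- the graph is connected -/
  conn : Γ.Connected
  /-- the group, as a group of permutations of the vertices -/
  G : Subgroup (Equiv.Perm V)
  /-- every element of `G` is an automorphism of `Γ` -/
  adj_iff : ∀ g ∈ G, ∀ a b : V, Γ.Adj (g a) (g b) ↔ Γ.Adj a b
  /-- `G` is transitive on the vertices -/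
  vtrans : ∀ a b : V, ∃ g ∈ G, g a = b

/-- The permutation group induced on the neighbourhood of `v` by the elements of `H`
fixing `v` (i.e. `H_v^{Γ(v)}` for `H = G`, and `G_{uv}^{Γ(v)}` for `H = G_u`). -/
def localGroup {V : Type} (Γ : SimpleGraph V) (H : Subgroup (Equiv.Perm V)) (v : V) :
    Subgroup (Equiv.Perm {w : V // Γ.Adj v w}) where
  carrier := {σ | ∃ g ∈ H, g v = v ∧ ∀ w : {w : V // Γ.Adj v w}, (σ w : V) = g (w : V)}
  one_mem' := ⟨1, H.one_mem, rfl, fun _ => rfl⟩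
  mul_mem' := by
    rintro σ τ ⟨g, hg, hgv, hσ⟩ ⟨h, hh, hhv, hτ⟩
    refine ⟨g * h, H.mul_mem hg hh, ?_, fun w => ?_⟩
    · show g (h v) = v
      rw [hhv, hgv]
    · show ((σ (τ w) : V)) = g (h (w : V))
      rw [hσ (τ w), hτ w]
  inv_mem' := by
    rintro σ ⟨g, hg, hgv, hσ⟩
    refine ⟨g⁻¹, H.inv_mem hg, ?_, fun w => ?_⟩
    · exact ((Equiv.Perm.eq_inv_iff_eq).mpr hgv).symm
    · rw [Equiv.Perm.eq_inv_iff_eq]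
      rw [← hσ (σ⁻¹ w), ← Equiv.Perm.mul_apply, mul_inv_cancel, Equiv.Perm.one_apply]

/-- Two permutation groups are permutation isomorphic if some bijection of the underlying
sets carries one onto the other (this yields an isomorphism intertwining the actions). -/
def IsPermIso {α β : Type*} (L : Subgroup (Equiv.Perm α)) (M : Subgroup (Equiv.Perm β)) : Prop :=
  ∃ e : α ≃ β, ∀ σ : Equiv.Perm α, σ ∈ L ↔ e.permCongr σ ∈ M

/-- The pair `(Γ, G)` is locally-`L`: the permutation group induced by a vertex stabiliser
`G_v` on the neighbourhood `Γ(v)` is permutation isomorphic to `L`. -/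
def IsLocally {Ω : Type*} (L : Subgroup (Equiv.Perm Ω)) (P : VTPair) : Prop :=
  ∀ v : P.V, IsPermIso L (localGroup P.Γ P.G v)

/-- The arc-stabiliser `G_{uv} = G_u ∩ G_v`. -/
def arcStab (P : VTPair) (u v : P.V) : Subgroup (Equiv.Perm P.V) :=
  P.G ⊓ MulAction.stabilizer (Equiv.Perm P.V) u ⊓ MulAction.stabilizer (Equiv.Perm P.V) v

/-- A transitive permutation group `L` is graph-restrictive if there is a constant `c`
bounding the order of all arc-stabilisers of locally-`L` pairs. -/
def GraphRestrictive {Ω : Type*} (L : Subgroup (Equiv.Perm Ω)) : Prop :=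
  ∃ c : ℕ, ∀ P : VTPair, IsLocally L P → ∀ u v : P.V, P.Γ.Adj u v →
    Nat.card ↥(arcStab P u v) ≤ c

/-- A transitive permutation group `L` is `p`-graph-restrictive if there is a constant `c`
bounding the largest power of `p` dividing the order of an arc-stabiliser of a locally-`L`
pair. -/
def PGraphRestrictive {Ω : Type*} (p : ℕ) (L : Subgroup (Equiv.Perm Ω)) : Prop :=
  ∃ c : ℕ, ∀ P : VTPair, IsLocally L P → ∀ u v : P.V, P.Γ.Adj u v →
    p ^ ((Nat.card ↥(arcStab P u v)).factorization p) ≤ c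

/-- A permutation group (given as a subgroup of `Equiv.Perm Ω`) is transitive. -/
def IsTransitivePermGroup {Ω : Type*} (N : Subgroup (Equiv.Perm Ω)) : Prop :=
  ∀ x y : Ω, ∃ g ∈ N, g x = y

/-- A permutation group is semiregular if only the identity fixes a point. -/
def IsSemiregularPermGroup {Ω : Type*} (N : Subgroup (Equiv.Perm Ω)) : Prop :=
  ∀ n ∈ N, ∀ x : Ω, n x = x → n = 1

/-- A transitive permutation group is semiprimitive if each of its normal subgroups is
either transitive or semiregular. -/
def IsSemiprimitivePermGroup {Ω : Type*} (L : Subgroup (Equiv.Perm Ω)) : Prop :=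
  IsTransitivePermGroup L ∧
  ∀ N : Subgroup (Equiv.Perm Ω), N ≤ L → (∀ g ∈ L, ∀ n ∈ N, g⁻¹ * n * g ∈ N) →
    IsTransitivePermGroup N ∨ IsSemiregularPermGroup N

/-- The subgroup `G_v^{[1]}` of `G_v` fixing every neighbour of `v`. -/
def fix1 (P : VTPair) (v : P.V) : Subgroup (Equiv.Perm P.V) :=
  P.G ⊓ MulAction.stabilizer (Equiv.Perm P.V) v ⊓
    ⨅ w : {w : P.V // P.Γ.Adj v w}, MulAction.stabilizer (Equiv.Perm P.V) (w : P.V)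

/-!
The graph is the coset graph of `Ḡ = ⟨α(A), β(B)⟩` on `Ḡ ⧸ α(A)`, with `gα(A)` joined to
`gtα(A)` for `t = β(b)`, `b ∈ B \ C`. As `t² ∈ α(A)`, `Ḡ` is arc-transitive, and the
neighbourhood of the base vertex is `α(A) ⧸ (α(A) ∩ α(A)^t)`. So it suffices that `α` is injective,
`α` and `β` agree on `C`, and `α(A) ∩ α(A)^t = α(C)`: the kernel of the action on vertices then
lies in `α(C)` and is normalised by `α(A)` and `β(B)`, so it is trivial.

Such a finite `Ḡ` is found inside the permutations of `Ω = B/C × A/C × A/C × C`. Reading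
`(s, p, q, c)` as the element `s̄c` of `B` lets `B` act by right multiplication; reading it as
`p̄c ∈ A` on the sheet `s = C` and as `q̄c ∈ A` on the other sheet lets `A` act likewise. Both
restrict to `C` acting on the last coordinate alone. Since `β(b)` swaps the sheets, an element of
`α(A) ∩ α(A)^t` fixes `p` on the base sheet, which forces it into `α(C)`.
-/

open Function Equiv

noncomputable section

theorem mk_eq_mk_one_iff {G : Type*} [Group G] {s : Subgroup G} {x : G} :
    (x : G ⧸ s) = ((1 : G) : G ⧸ s) ↔ x ∈ s := by
  rw [QuotientGroup.eq, mul_one, inv_mem_iff]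

section CosetGraph

variable {G : Type*} [Group G] {H : Subgroup G} {t : G}

variable (H t) in
def cosetGraph : SimpleGraph (G ⧸ H) :=
  SimpleGraph.fromRel fun u w => ∃ g : G, u = g ∧ w = ↑(g * t)

theorem cosetGraph_adj_smul (g : G) {u w : G ⧸ H} :
    (cosetGraph H t).Adj (g • u) (g • w) ↔ (cosetGraph H t).Adj u w := by
  suffices h : ∀ (g : G) {u w : G ⧸ H}, (cosetGraph H t).Adj u w →
      (cosetGraph H t).Adj (g • u) (g • w) from
    ⟨fun huw => by simpa using h g⁻¹ huw, h g⟩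
  intro g u w huw
  have hrel {u w : G ⧸ H} :
      (∃ x : G, u = x ∧ w = ↑(x * t)) → ∃ x : G, g • u = x ∧ g • w = ↑(x * t) := by
    rintro ⟨x, rfl, rfl⟩
    exact ⟨g * x, rfl, by rw [mul_assoc]; rfl⟩
  rw [cosetGraph, SimpleGraph.fromRel_adj] at huw ⊢
  exact ⟨(MulAction.injective g).ne huw.1, huw.2.imp hrel hrel⟩

theorem cosetGraph_adj_iff (ht : t ∉ H) (ht2 : t * t ∈ H) {u w : G ⧸ H} :
    (cosetGraph H t).Adj u w ↔ ∃ g : G, u = g ∧ w = ↑(g * t) := by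
  rw [cosetGraph, SimpleGraph.fromRel_adj]
  constructor
  · rintro ⟨-, h | ⟨g, rfl, rfl⟩⟩
    · exact h
    · refine ⟨g * t, rfl, ?_⟩
      rw [mul_assoc]
      exact (QuotientGroup.mk_mul_of_mem g ht2).symm
  · rintro ⟨g, rfl, rfl⟩
    refine ⟨fun h => ht ?_, Or.inl ⟨g, rfl, rfl⟩⟩
    simpa using QuotientGroup.eq.mp h

theorem cosetGraph_reachable_mul (g : G) {x : G}
    (hx : x ∈ Subgroup.closure (insert t (H : Set G))) :
    (cosetGraph H t).Reachable g ↑(g * x) := by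
  induction hx using Subgroup.closure_induction generalizing g with
  | mem x hx =>
    rcases hx with rfl | hx
    · by_cases h : (g : G ⧸ H) = ↑(g * x)
      · rw [h]
      · exact SimpleGraph.Adj.reachable <| (SimpleGraph.fromRel_adj _ _ _).mpr
          ⟨h, Or.inl ⟨g, rfl, rfl⟩⟩
    · rw [QuotientGroup.mk_mul_of_mem g hx]
  | one => rw [mul_one]
  | mul x y _ _ hx hy => exact (hx g).trans (by simpa [mul_assoc] using hy (g * x))
  | inv x _ hx => simpa using (hx (g * x⁻¹)).symm

theorem cosetGraph_connected (hgen : Subgroup.closure (insert t (H : Set G)) = ⊤) :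
    (cosetGraph H t).Connected := by
  rw [SimpleGraph.connected_iff]
  refine ⟨fun u w => ?_, ⟨↑(1 : G)⟩⟩
  induction u using QuotientGroup.induction_on with | H g =>
  induction w using QuotientGroup.induction_on with | H g' =>
  have h := cosetGraph_reachable_mul (H := H) g (x := g⁻¹ * g') (hgen ▸ Subgroup.mem_top _)
  rwa [mul_inv_cancel_left] at h

theorem cosetGraph_exists_smul_eq_smul_eq (ht : t ∉ H) (ht2 : t * t ∈ H) {u v u' v' : G ⧸ H}
    (huv : (cosetGraph H t).Adj u v) (hu'v' : (cosetGraph H t).Adj u' v') :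
    ∃ g : G, g • u = u' ∧ g • v = v' := by
  obtain ⟨x, rfl, rfl⟩ := (cosetGraph_adj_iff ht ht2).mp huv
  obtain ⟨x', rfl, rfl⟩ := (cosetGraph_adj_iff ht ht2).mp hu'v'
  refine ⟨x' * x⁻¹, ?_, ?_⟩ <;> simp [MulAction.Quotient.smul_mk, mul_assoc]

end CosetGraph

section Neighbourhood

variable {G A : Type*} [Group G] [Group A] {H : Subgroup G} {t : G}

theorem exists_neighborEquiv (ht : t ∉ H) (ht2 : t * t ∈ H) {φ : A →* G} (hφ : φ.range = H)
    {K : Subgroup A} (hK : ∀ a, t⁻¹ * φ a * t ∈ H ↔ a ∈ K) :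
    ∃ e : {w // (cosetGraph H t).Adj ↑(1 : G) w} ≃ A ⧸ K,
      ∀ (a : A) (w w' : {w // (cosetGraph H t).Adj ↑(1 : G) w}),
        φ a • (w : G ⧸ H) = w' → e w' = a • e w := by
  have hcoset (a b : A) : (↑(φ a * t) : G ⧸ H) = ↑(φ b * t) ↔ (a : A ⧸ K) = b := by
    rw [QuotientGroup.eq, QuotientGroup.eq, ← hK]
    simp only [mul_inv_rev, map_mul, map_inv, mul_assoc]
  let η : A ⧸ K → G ⧸ H :=
    Quotient.lift (fun a => (↑(φ a * t) : G ⧸ H)) fun a b hab =>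
      (hcoset a b).mpr (Quotient.sound hab)
  have hη_inj : Injective η := by
    intro x y
    induction x using QuotientGroup.induction_on
    induction y using QuotientGroup.induction_on
    exact (hcoset _ _).mp
  have hη_smul (a : A) (x : A ⧸ K) : η (a • x) = φ a • η x := by
    induction x using QuotientGroup.induction_on
    simp [η, MulAction.Quotient.smul_mk, mul_assoc]
  have hη_range (w : G ⧸ H) : (cosetGraph H t).Adj ↑(1 : G) w ↔ ∃ x, η x = w := by
    rw [cosetGraph_adj_iff ht ht2]
    constructor
    · rintro ⟨g, hg, rfl⟩
      obtain ⟨a, rfl⟩ : g ∈ φ.range := hφ ▸ mk_eq_mk_one_iff.mp hg.symm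
      exact ⟨a, rfl⟩
    · rintro ⟨x, rfl⟩
      induction x using QuotientGroup.induction_on with | H a =>
      exact ⟨φ a, (mk_eq_mk_one_iff.mpr (hφ ▸ ⟨a, rfl⟩)).symm, rfl⟩
  let e : A ⧸ K ≃ {w // (cosetGraph H t).Adj ↑(1 : G) w} :=
    Equiv.ofBijective (fun x => ⟨η x, (hη_range _).mpr ⟨x, rfl⟩⟩)
      ⟨fun x y h => hη_inj (congrArg Subtype.val h), fun w =>
        let ⟨x, hx⟩ := (hη_range w).mp w.2; ⟨x, Subtype.ext hx⟩⟩
  refine ⟨e.symm, fun a w w' hw => e.symm_apply_eq.mpr (Subtype.ext ?_)⟩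
  change (w' : G ⧸ H) = η (a • e.symm w)
  rw [hη_smul, ← hw]
  exact congrArg (φ a • ·) (congrArg Subtype.val (e.apply_symm_apply w)).symm

end Neighbourhood

theorem range_toPermHom_inf_stabilizer {G X : Type*} [Group G] [MulAction G X] (x : X) :
    (MulAction.toPermHom G X).range ⊓ MulAction.stabilizer (Perm X) x =
      (MulAction.stabilizer G x).map (MulAction.toPermHom G X) := by
  ext σ
  constructor
  · rintro ⟨⟨g, rfl⟩, hg⟩
    exact ⟨g, hg, rfl⟩
  · rintro ⟨g, hg, rfl⟩
    exact ⟨⟨g, rfl⟩, hg⟩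

theorem exists_mulEquiv_stabilizer {G X A : Type*} [Group G] [MulAction G X] [Group A]
    (hX : Injective (MulAction.toPermHom G X)) {φ : A →* G} (hφ : Injective φ) {x : X}
    (hφx : φ.range = MulAction.stabilizer G x) :
    ∃ ψ : ↥((MulAction.toPermHom G X).range ⊓ MulAction.stabilizer (Perm X) x) ≃* A,
      ∀ y : ↥((MulAction.toPermHom G X).range ⊓ MulAction.stabilizer (Perm X) x),
        (y : Perm X) = MulAction.toPermHom G X (φ (ψ y)) := by
  let ψ : ↥((MulAction.toPermHom G X).range ⊓ MulAction.stabilizer (Perm X) x) ≃* A :=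
    (MulEquiv.subgroupCongr (range_toPermHom_inf_stabilizer x)).trans <|
      ((MulAction.stabilizer G x).equivMapOfInjective _ hX).symm.trans <|
        (MulEquiv.subgroupCongr hφx.symm).trans (MonoidHom.ofInjective hφ).symm
  refine ⟨ψ, fun y => ?_⟩
  obtain ⟨a, rfl⟩ := ψ.symm.surjective y
  simp [ψ, MonoidHom.ofInjective_apply]

def cosetVTPair {G : Type} [Group G] [Finite G] (H : Subgroup G) (t : G)
    (hconn : (cosetGraph H t).Connected) : VTPair where
  V := G ⧸ H
  fintypeV := Fintype.ofFinite _
  Γ := cosetGraph H t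
  conn := hconn
  G := (MulAction.toPermHom G (G ⧸ H)).range
  adj_iff := by
    rintro _ ⟨g, rfl⟩ u w
    exact cosetGraph_adj_smul g
  vtrans u w := by
    obtain ⟨g, rfl⟩ := MulAction.exists_smul_eq G u w
    exact ⟨_, ⟨g, rfl⟩, rfl⟩

section RegularAction

variable {G Ω Y : Type*} [Group G]

def rightRegularPermOf (E : Ω ≃ G × Y) : G →* Perm Ω where
  toFun g := (E.trans ((Equiv.mulRight g⁻¹).prodCongr (Equiv.refl Y))).trans E.symm
  map_one' := by ext ω; simp
  map_mul' g h := by ext ω; simp [Prod.map, mul_assoc]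

theorem rightRegularPermOf_apply (E : Ω ≃ G × Y) (g : G) (ω : Ω) :
    E (rightRegularPermOf E g ω) = ((E ω).1 * g⁻¹, (E ω).2) := by
  simp [rightRegularPermOf, Prod.map]

theorem rightRegularPermOf_injective [Nonempty Ω] (E : Ω ≃ G × Y) :
    Injective (rightRegularPermOf E) := by
  refine (injective_iff_map_eq_one _).mpr fun g hg => ?_
  obtain ⟨ω⟩ := ‹Nonempty Ω›
  have := congrArg (fun p => (p : G × Y).1) (rightRegularPermOf_apply E g ω)
  simpa [hg] using this

end RegularAction

section CosetCoordinates

variable {G C Y Z : Type*} [Group G] [Group C] {i : C →* G} (hi : Injective i)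

def cosetDecomp : (G ⧸ i.range) × C ≃ G :=
  Equiv.ofBijective (fun p => p.1.out * i p.2) <| by
    refine ⟨fun p q hpq => ?_, fun x => ?_⟩
    · have hfst : p.1 = q.1 := by
        simpa [QuotientGroup.mk_mul_of_mem _ (i.mem_range.2 ⟨_, rfl⟩)]
          using congrArg (QuotientGroup.mk (s := i.range)) hpq
      simp only [hfst, mul_right_inj] at hpq
      exact Prod.ext hfst (hi hpq)
    · obtain ⟨c, hc⟩ : ((x : G ⧸ i.range).out)⁻¹ * x ∈ i.range :=
        QuotientGroup.leftRel_apply.mp (Quotient.exact' (QuotientGroup.out_eq' _))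
      exact ⟨((x : G ⧸ i.range), c), by simp [hc]⟩

theorem cosetDecomp_apply (q : G ⧸ i.range) (c : C) : cosetDecomp hi (q, c) = q.out * i c :=
  rfl

theorem mk_cosetDecomp (q : G ⧸ i.range) (c : C) :
    (cosetDecomp hi (q, c) : G ⧸ i.range) = q := by
  simp [cosetDecomp_apply, QuotientGroup.mk_mul_of_mem _ (i.mem_range.2 ⟨_, rfl⟩)]

theorem cosetDecomp_mul_inv (q : G ⧸ i.range) (c d : C) :
    cosetDecomp hi (q, c) * (i d)⁻¹ = cosetDecomp hi (q, c * d⁻¹) := by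
  simp [cosetDecomp_apply, mul_assoc]

def cosetCoords (e : Z ≃ (G ⧸ i.range) × Y) : Z × C ≃ G × Y :=
  (prodCongr e (Equiv.refl C)).trans <|
    (prodAssoc _ _ _).trans <| (prodCongr (Equiv.refl _) (prodComm _ _)).trans <|
      (prodAssoc _ _ _).symm.trans (prodCongr (cosetDecomp hi) (Equiv.refl Y))

theorem cosetCoords_apply (e : Z ≃ (G ⧸ i.range) × Y) (z : Z) (c : C) :
    cosetCoords hi e (z, c) = (cosetDecomp hi ((e z).1, c), (e z).2) :=
  rfl

abbrev cosetAction (e : Z ≃ (G ⧸ i.range) × Y) : G →* Perm (Z × C) :=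
  rightRegularPermOf (cosetCoords hi e)

variable (e : Z ≃ (G ⧸ i.range) × Y)

theorem cosetAction_map_apply (d : C) (z : Z) (c : C) :
    cosetAction hi e (i d) (z, c) = (z, c * d⁻¹) := by
  apply (cosetCoords hi e).injective
  rw [rightRegularPermOf_apply, cosetCoords_apply, cosetCoords_apply, cosetDecomp_mul_inv]

theorem cosetCoords_snd (ω : Z × C) : (cosetCoords hi e ω).2 = (e ω.1).2 :=
  rfl

theorem mk_cosetCoords_fst (ω : Z × C) :
    ((cosetCoords hi e ω).1 : G ⧸ i.range) = (e ω.1).1 :=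
  mk_cosetDecomp hi _ _

theorem cosetAction_snd (g : G) (ω : Z × C) : (e (cosetAction hi e g ω).1).2 = (e ω.1).2 := by
  have h := congrArg Prod.snd (rightRegularPermOf_apply (cosetCoords hi e) g ω)
  rwa [cosetCoords_snd, cosetCoords_snd] at h

theorem cosetAction_fst (g : G) (ω : Z × C) :
    (e (cosetAction hi e g ω).1).1 = ↑((cosetCoords hi e ω).1 * g⁻¹) := by
  rw [← mk_cosetCoords_fst hi e, rightRegularPermOf_apply]

theorem cosetAction_refl_fst_ne {g : G} (hg : g ∉ i.range) {ω : ((G ⧸ i.range) × Y) × C}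
    (hω : ω.1.1 = ↑(1 : G)) : (cosetAction hi (Equiv.refl _) g ω).1.1 ≠ ↑(1 : G) := by
  have hx : (cosetCoords hi (Equiv.refl _) ω).1 ∈ i.range := by
    rw [← mk_eq_mk_one_iff, mk_cosetCoords_fst, Equiv.refl_apply, hω]
  rw [← Equiv.refl_apply (cosetAction hi _ g ω).1, cosetAction_fst, Ne, mk_eq_mk_one_iff,
    Subgroup.mul_mem_cancel_left _ hx, inv_mem_iff]
  exact hg

end CosetCoordinates

section Sheets

variable {S Q : Type*}

open scoped Classical in
def sheetEquiv (s₀ : S) : S × Q × Q ≃ Q × S × Q where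
  toFun z := if z.1 = s₀ then (z.2.1, z.1, z.2.2) else (z.2.2, z.1, z.2.1)
  invFun p := if p.2.1 = s₀ then (p.2.1, p.1, p.2.2) else (p.2.1, p.2.2, p.1)
  left_inv := by rintro ⟨s, p, q⟩; by_cases h : s = s₀ <;> simp [h]
  right_inv := by rintro ⟨p, s, q⟩; by_cases h : s = s₀ <;> simp [h]

theorem sheetEquiv_of_eq {s₀ : S} {z : S × Q × Q} (h : z.1 = s₀) :
    sheetEquiv s₀ z = (z.2.1, z.1, z.2.2) :=
  if_pos h

theorem sheetEquiv_of_ne {s₀ : S} {z : S × Q × Q} (h : z.1 ≠ s₀) :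
    sheetEquiv s₀ z = (z.2.2, z.1, z.2.1) :=
  if_neg h

theorem sheetEquiv_snd_fst (s₀ : S) (z : S × Q × Q) : (sheetEquiv s₀ z).2.1 = z.1 := by
  by_cases h : z.1 = s₀
  · rw [sheetEquiv_of_eq h]
  · rw [sheetEquiv_of_ne h]

variable {G C : Type*} [Group G] [Group C] {i : C →* G} (hi : Injective i) (s₀ : S)

theorem cosetAction_sheetEquiv_sheet (g : G) (ω : (S × (G ⧸ i.range) × (G ⧸ i.range)) × C) :
    (cosetAction hi (sheetEquiv s₀) g ω).1.1 = ω.1.1 := by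
  rw [← sheetEquiv_snd_fst s₀, cosetAction_snd, sheetEquiv_snd_fst]

theorem cosetAction_sheetEquiv_of_ne (g : G) {ω : (S × (G ⧸ i.range) × (G ⧸ i.range)) × C}
    (hω : ω.1.1 ≠ s₀) : (cosetAction hi (sheetEquiv s₀) g ω).1.2.1 = ω.1.2.1 := by
  have h := cosetAction_snd hi (sheetEquiv s₀) g ω
  rw [sheetEquiv_of_ne hω, sheetEquiv_of_ne (by rwa [cosetAction_sheetEquiv_sheet])] at h
  exact congrArg Prod.snd h

theorem mem_range_of_cosetAction_sheetEquiv {g : G}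
    {ω : (S × (G ⧸ i.range) × (G ⧸ i.range)) × C} (hω : ω.1.1 = s₀)
    (hp : ω.1.2.1 = ↑(1 : G)) (hg : (cosetAction hi (sheetEquiv s₀) g ω).1.2.1 = ↑(1 : G)) :
    g ∈ i.range := by
  have hx : (cosetCoords hi (sheetEquiv s₀) ω).1 ∈ i.range := by
    rw [← mk_eq_mk_one_iff, mk_cosetCoords_fst, sheetEquiv_of_eq hω, hp]
  have h := cosetAction_fst hi (sheetEquiv s₀) g ω
  rw [sheetEquiv_of_eq (by rwa [cosetAction_sheetEquiv_sheet]), hg, eq_comm, mk_eq_mk_one_iff,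
    Subgroup.mul_mem_cancel_left _ hx, inv_mem_iff] at h
  exact h

end Sheets

section Completion

variable {A B C G : Type*} [Group A] [Group B] [Group C] [Group G] {iA : C →* A} {iB : C →* B}

/-- The properties of the amalgamated free product of `A` and `B` over `C` that the coset graph
of `α(A)` sees within distance one of the base vertex. -/
structure IsFaithfulCompletion (iA : C →* A) (iB : C →* B) (α : A →* G) (β : B →* G) : Prop where
  injective : Injective α
  comp_eq : α.comp iA = β.comp iB
  not_mem_range : ∀ b ∉ iB.range, β b ∉ α.range
  mem_range_of_conj_mem :
    ∀ b ∉ iB.range, ∀ a, (β b)⁻¹ * α a * β b ∈ α.range → a ∈ iA.range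

theorem isFaithfulCompletion_cosetAction (hiA : Injective iA) (hiB : Injective iB) :
    IsFaithfulCompletion iA iB (cosetAction hiA (sheetEquiv (↑(1 : B) : B ⧸ iB.range)))
      (cosetAction hiB (Equiv.refl ((B ⧸ iB.range) × (A ⧸ iA.range) × (A ⧸ iA.range)))) := by
  set α := cosetAction hiA (sheetEquiv (↑(1 : B) : B ⧸ iB.range))
  set β := cosetAction hiB (Equiv.refl ((B ⧸ iB.range) × (A ⧸ iA.range) × (A ⧸ iA.range)))
  have hβ (b : B) (ω) : (β b ω).1.2 = ω.1.2 := cosetAction_snd hiB (Equiv.refl _) b ω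
  let ω₀ : ((B ⧸ iB.range) × (A ⧸ iA.range) × (A ⧸ iA.range)) × C :=
    ((↑(1 : B), ↑(1 : A), ↑(1 : A)), 1)
  refine ⟨rightRegularPermOf_injective _, ?_, fun b hb ⟨a, hab⟩ => ?_,
    fun b hb a ⟨a', ha'⟩ => ?_⟩
  · refine MonoidHom.ext fun c => Equiv.ext fun ⟨z, d⟩ => ?_
    simp only [MonoidHom.comp_apply, α, β, cosetAction_map_apply]
  · apply cosetAction_refl_fst_ne hiB hb (ω := ω₀) rfl
    rw [← hab, cosetAction_sheetEquiv_sheet]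
  · have hω₁ : ((β b)⁻¹ ω₀).1.1 ≠ ↑(1 : B) := by
      rw [← map_inv]
      exact cosetAction_refl_fst_ne hiB (by rwa [inv_mem_iff]) rfl
    refine mem_range_of_cosetAction_sheetEquiv hiA _ (ω := ω₀) rfl rfl ?_
    have hconj : α a ω₀ = β b (α a' ((β b)⁻¹ ω₀)) := by
      simp [ha', Perm.mul_apply]
    rw [hconj, hβ, cosetAction_sheetEquiv_of_ne hiA _ _ hω₁, ← map_inv, hβ]

end Completion

namespace IsFaithfulCompletion

variable {A B C G G' : Type*} [Group A] [Group B] [Group C] [Group G] [Group G']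
  {iA : C →* A} {iB : C →* B} {α : A →* G} {β : B →* G}

theorem comp (h : IsFaithfulCompletion iA iB α β) {f : G →* G'} (hf : Injective f) :
    IsFaithfulCompletion iA iB (f.comp α) (f.comp β) where
  injective := hf.comp h.injective
  comp_eq := by rw [MonoidHom.comp_assoc, h.comp_eq, MonoidHom.comp_assoc]
  not_mem_range b hb := by
    rintro ⟨a, ha⟩
    exact h.not_mem_range b hb ⟨a, hf ha⟩
  mem_range_of_conj_mem b hb a := by
    rintro ⟨a', ha'⟩
    refine h.mem_range_of_conj_mem b hb a ⟨a', hf ?_⟩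
    simpa using ha'

theorem of_comp {f : G →* G'} (hf : Injective f)
    (h : IsFaithfulCompletion iA iB (f.comp α) (f.comp β)) : IsFaithfulCompletion iA iB α β where
  injective := Injective.of_comp (f := f) h.injective
  comp_eq := by
    have h' := h.comp_eq
    rw [MonoidHom.comp_assoc, MonoidHom.comp_assoc] at h'
    exact MonoidHom.ext fun c => hf (DFunLike.congr_fun h' c)
  not_mem_range b hb := by
    rintro ⟨a, ha⟩
    exact h.not_mem_range b hb ⟨a, by simp [ha]⟩
  mem_range_of_conj_mem b hb a := by
    rintro ⟨a', ha'⟩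
    exact h.mem_range_of_conj_mem b hb a ⟨a', by simp [ha']⟩

theorem exists_sup_eq_top {G : Type} [Group G] [Finite G] {α : A →* G} {β : B →* G}
    (h : IsFaithfulCompletion iA iB α β) :
    ∃ (G' : Type) (_ : Group G') (_ : Finite G') (α' : A →* G') (β' : B →* G'),
      IsFaithfulCompletion iA iB α' β' ∧ α'.range ⊔ β'.range = ⊤ := by
  set K := α.range ⊔ β.range
  set α' := α.codRestrict K fun a => Subgroup.mem_sup_left (α.mem_range.2 ⟨a, rfl⟩)
  set β' := β.codRestrict K fun b => Subgroup.mem_sup_right (β.mem_range.2 ⟨b, rfl⟩)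
  refine ⟨K, inferInstance, inferInstance, α', β',
    h.of_comp Subtype.val_injective (f := K.subtype), ?_⟩
  apply Subgroup.map_injective K.subtype_injective
  rw [Subgroup.map_sup, MonoidHom.map_range, MonoidHom.map_range, ← MonoidHom.range_eq_map,
    Subgroup.range_subtype]
  rfl

theorem map_mem_range (h : IsFaithfulCompletion iA iB α β) {b : B} (hb : b ∈ iB.range) :
    β b ∈ α.range := by
  obtain ⟨c, rfl⟩ := hb
  exact ⟨iA c, DFunLike.congr_fun h.comp_eq c⟩

theorem conj_mem_range_iff (h : IsFaithfulCompletion iA iB α β) (hR : iB.range.Normal) {b : B}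
    (hb : b ∉ iB.range) (a : A) : (β b)⁻¹ * α a * β b ∈ α.range ↔ a ∈ iA.range := by
  refine ⟨h.mem_range_of_conj_mem b hb a, ?_⟩
  rintro ⟨c, rfl⟩
  have hc : α (iA c) = β (iB c) := DFunLike.congr_fun h.comp_eq c
  rw [hc, ← map_inv, ← map_mul, ← map_mul]
  exact h.map_mem_range (hR.conj_mem' _ ⟨c, rfl⟩ b)

theorem mul_self_mem_range (h : IsFaithfulCompletion iA iB α β) (hindex : iB.range.index = 2)
    (b : B) : β b * β b ∈ α.range := by
  rw [← map_mul]
  exact h.map_mem_range (Subgroup.mul_self_mem_of_index_two hindex b)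

theorem closure_eq_top (h : IsFaithfulCompletion iA iB α β) (hindex : iB.range.index = 2)
    {b : B} (hb : b ∉ iB.range) (hgen : α.range ⊔ β.range = ⊤) :
    Subgroup.closure (insert (β b) (α.range : Set G)) = ⊤ := by
  have hα : α.range ≤ Subgroup.closure (insert (β b) (α.range : Set G)) := fun _ hx =>
    Subgroup.subset_closure (Set.mem_insert_of_mem _ hx)
  rw [eq_top_iff, ← hgen, sup_le_iff]
  refine ⟨hα, ?_⟩
  rintro _ ⟨b', rfl⟩
  by_cases hb' : b' ∈ iB.range
  · exact hα (h.map_mem_range hb')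
  · have hbb' : b⁻¹ * b' ∈ iB.range := by
      rw [Subgroup.mul_mem_iff_of_index_two hindex, inv_mem_iff]
      exact iff_of_false hb hb'
    rw [← mul_inv_cancel_left b b', map_mul]
    exact Subgroup.mul_mem _ (Subgroup.subset_closure (Set.mem_insert _ _))
      (hα (h.map_mem_range hbb'))

theorem normalCore_eq_bot (h : IsFaithfulCompletion iA iB α β) (hR : iB.range.Normal) {b : B}
    (hb : b ∉ iB.range)
    (hcommon : ∀ N : Subgroup C, (N.map iA).Normal → (N.map iB).Normal → N = ⊥) :
    α.range.normalCore = ⊥ := by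
  set K := α.range.normalCore
  have hKA : K.comap α ≤ iA.range := fun a ha =>
    h.mem_range_of_conj_mem b hb a
      (α.range.normalCore_le ((Subgroup.normalCore_normal _).conj_mem' _ ha _))
  have hN : (K.comap α).comap iA = ⊥ := by
    apply hcommon
    · rw [Subgroup.map_comap_eq_self hKA]
      exact (Subgroup.normalCore_normal _).comap α
    · rw [Subgroup.comap_comap, h.comp_eq, ← Subgroup.comap_comap, Subgroup.map_comap_eq]
      have := (Subgroup.normalCore_normal α.range).comap β
      exact Subgroup.normal_inf_normal _ _
  rw [eq_bot_iff]
  intro g hg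
  obtain ⟨a, rfl⟩ := α.range.normalCore_le hg
  obtain ⟨c, rfl⟩ := hKA hg
  have hc : c ∈ (K.comap α).comap iA := hg
  rw [hN, Subgroup.mem_bot] at hc
  simp [hc]

end IsFaithfulCompletion

theorem exists_isFaithfulCompletion_perm_fin {A B C : Type*} [Group A] [Group B] [Group C]
    [Finite A] [Finite B] [Finite C] {iA : C →* A} {iB : C →* B} (hiA : Injective iA)
    (hiB : Injective iB) :
    ∃ (n : ℕ) (α : A →* Perm (Fin n)) (β : B →* Perm (Fin n)), IsFaithfulCompletion iA iB α β :=
  ⟨_, _, _, (isFaithfulCompletion_cosetAction hiA hiB).comp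
    (f := (Equiv.permCongrHom (Finite.equivFin _)).toMonoidHom) (Equiv.permCongrHom _).injective⟩

end

/-- **Lemma.** Let `A`, `B`, `C` be finite groups with `C = A ∩ B` (given by embeddings of
`C` into `A` and `B`) and `|B : C| = 2`. If the trivial group is the only subgroup of `C`
normal in both `A` and `B`, then there is a finite group `Ḡ` and a connected
`Ḡ`-arc-transitive graph `Γ` such that the stabiliser `Ḡ_v` of a vertex `v` is isomorphic
to `A`, and the action of `Ḡ_v` on `Γ(v)` is permutation isomorphic to the action of `A`
on the cosets of `C` in `A`. -/
theorem amalgam_graph_realization {A B C : Type*} [Group A] [Group B] [Group C]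
    [Finite A] [Finite B] [Finite C]
    (iA : C →* A) (iB : C →* B)
    (hiA : Function.Injective iA) (hiB : Function.Injective iB)
    (hindex : iB.range.index = 2)
    (hcommon : ∀ N : Subgroup C, (Subgroup.map iA N).Normal →
      (Subgroup.map iB N).Normal → N = ⊥) :
    ∃ P : VTPair,
      (∀ u v u' v' : P.V, P.Γ.Adj u v → P.Γ.Adj u' v' →
        ∃ g ∈ P.G, g u = u' ∧ g v = v') ∧
      ∃ v : P.V,
        ∃ ψ : ↥(P.G ⊓ MulAction.stabilizer (Equiv.Perm P.V) v) ≃* A,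
          ∃ e : {w : P.V // P.Γ.Adj v w} ≃ (A ⧸ iA.range),
            ∀ (g : Equiv.Perm P.V)
              (hg : g ∈ P.G ⊓ MulAction.stabilizer (Equiv.Perm P.V) v)
              (w w' : {w : P.V // P.Γ.Adj v w}),
                g (w : P.V) = (w' : P.V) → e w' = ψ ⟨g, hg⟩ • e w := by
  obtain ⟨n, α₀, β₀, h₀⟩ := exists_isFaithfulCompletion_perm_fin hiA hiB
  obtain ⟨G, _, _, α, β, h, hgen⟩ := h₀.exists_sup_eq_top
  obtain ⟨b, -, hb⟩ := SetLike.exists_of_lt <| lt_top_iff_ne_top.mpr fun htop : iB.range = ⊤ => by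
    rw [htop, Subgroup.index_top] at hindex
    omega
  have hR := Subgroup.normal_of_index_eq_two hindex
  have ht := h.not_mem_range b hb
  have ht2 := h.mul_self_mem_range hindex b
  have hfaithful : Injective (MulAction.toPermHom G (G ⧸ α.range)) := by
    rw [← MonoidHom.ker_eq_bot_iff, ← Subgroup.normalCore_eq_ker,
      h.normalCore_eq_bot hR hb hcommon]
  refine ⟨cosetVTPair α.range (β b) (cosetGraph_connected (h.closure_eq_top hindex hb hgen)),
    fun u v u' v' huv hu'v' => ?_, (↑(1 : G) : G ⧸ α.range), ?_⟩
  · obtain ⟨g, hgu, hgv⟩ := cosetGraph_exists_smul_eq_smul_eq ht ht2 huv hu'v'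
    exact ⟨_, ⟨g, rfl⟩, hgu, hgv⟩
  · obtain ⟨ψ, hψ⟩ := exists_mulEquiv_stabilizer hfaithful h.injective
      (MulAction.stabilizer_quotient _).symm
    obtain ⟨e, he⟩ := exists_neighborEquiv ht ht2 rfl (h.conj_mem_range_iff hR hb)
    refine ⟨ψ, e, fun g hg w w' hgw => he _ w w' ?_⟩
    rw [← hgw]
    exact (Equiv.congr_fun (hψ ⟨g, hg⟩) w.1).symm
end

section
/- Let (Γ,G) be a locally-transitive pair and let (u,v) be an arc of Γ. If G_{uv}^{[1]} is a non-trivial p-group for some prime p, then O_p(G_{uv}^{Γ(u)}) ≠ 1; that is, the permutation group induced by G_{uv} on Γ(u) has a non-trivial normal p-subgroup. -/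
/-!
If `O_p(G_{uv}^{Γ(u)}) = 1`, then `O_p(G_v^{[1]})`, being normalised by `G_{uv}`, induces a
trivial group on `Γ(u)`, so `O_p(G_v^{[1]}) ≤ G_{uv}^{[1]}`. Conversely `G_{uv}^{[1]}` is a normal
`p`-subgroup of `G_v^{[1]}`, so the two are equal, and by arc-transitivity
`O_p(G_a^{[1]}) = G_{ab}^{[1]}` for every arc `(a, b)`. The right-hand side is symmetric in `a`
and `b`, so by connectivity `O_p(G_a^{[1]})` does not depend on `a`; hence it fixes every vertex
and is trivial, contradicting `G_{uv}^{[1]} ≠ 1`.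
-/

open Equiv

namespace Subgroup

variable {G G' : Type*} [Group G] [Group G'] {p : ℕ}

/-- The `p`-core `O_p(H)`. -/
def pCore (p : ℕ) (H : Subgroup G) : Subgroup G :=
  sSup {N | N ≤ H ∧ IsPGroup p N ∧ H ≤ normalizer (N : Set G)}

lemma pCore_le (H : Subgroup G) : pCore p H ≤ H :=
  sSup_le fun _ hN => hN.1

lemma le_pCore {N H : Subgroup G} (hNH : N ≤ H) (hN : IsPGroup p N)
    (hHN : H ≤ normalizer (N : Set G)) : N ≤ pCore p H :=
  le_sSup ⟨hNH, hN, hHN⟩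

/-- The normal `p`-subgroups of `H` form a directed family, so every element of their join
already lies in one of them. -/
lemma isPGroup_pCore (H : Subgroup G) : IsPGroup p (pCore p H) := by
  have hbot : (⊥ : Subgroup G) ∈ {N | N ≤ H ∧ IsPGroup p N ∧ H ≤ normalizer (N : Set G)} :=
    ⟨bot_le, IsPGroup.of_bot, le_normalizer_of_normal⟩
  have hdir : DirectedOn (· ≤ ·) {N | N ≤ H ∧ IsPGroup p N ∧ H ≤ normalizer (N : Set G)} := by
    rintro N₁ ⟨hN₁H, hN₁, hHN₁⟩ N₂ ⟨hN₂H, hN₂, hHN₂⟩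
    refine ⟨N₁ ⊔ N₂, ⟨sup_le hN₁H hN₂H, hN₁.to_sup_of_normal_left' hN₂ (hN₂H.trans hHN₁), ?_⟩,
      le_sup_left, le_sup_right⟩
    exact (le_inf hHN₁ hHN₂).trans (normalizer_inf_normalizer_le_normalizer_sup N₁ N₂)
  rintro ⟨x, hx⟩
  obtain ⟨N, ⟨-, hN, -⟩, hxN⟩ := (mem_sSup_of_directedOn ⟨⊥, hbot⟩ hdir).1 hx
  obtain ⟨n, hn⟩ := hN ⟨x, hxN⟩
  exact ⟨n, Subtype.ext (by simpa using congrArg Subtype.val hn)⟩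

lemma map_pCore_le (f : G →* G') (H : Subgroup G) : (pCore p H).map f ≤ pCore p (H.map f) :=
  map_le_iff_le_comap.2 <| sSup_le fun _ ⟨hNH, hN, hHN⟩ => map_le_iff_le_comap.1 <|
    le_pCore (map_mono hNH) (hN.map f) ((map_mono hHN).trans (le_normalizer_map f))

end Subgroup

lemma SimpleGraph.Preconnected.eq_of_forall_adj {V α : Type*} {Γ : SimpleGraph V}
    (hΓ : Γ.Preconnected) {f : V → α} (hf : ∀ a b, Γ.Adj a b → f a = f b) (a b : V) :
    f a = f b := by
  induction (SimpleGraph.reachable_iff_reflTransGen a b).1 (hΓ a b) with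
  | refl => rfl
  | tail _ hadj ih => exact ih.trans (hf _ _ hadj)

section localGroup

variable {V : Type} {Γ : SimpleGraph V} {H K : Subgroup (Perm V)} {v : V}

lemma mem_localGroup_iff {σ : Perm {w : V // Γ.Adj v w}} :
    σ ∈ localGroup Γ H v ↔ ∃ g ∈ H, g v = v ∧ ∃ h, g.subtypePerm h = σ := by
  refine ⟨fun ⟨g, hg, hgv, hσ⟩ => ⟨g, hg, hgv, fun x => ⟨fun hx => ?_, fun hx => ?_⟩, ?_⟩,
    fun ⟨g, hg, hgv, _, hσ⟩ => ⟨g, hg, hgv, fun w => by rw [← hσ]; rfl⟩⟩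
  · obtain ⟨w, hw⟩ := σ.surjective ⟨g x, hx⟩
    have hgw : g w = g x := by rw [← hσ, hw]
    exact g.injective hgw ▸ w.2
  · exact hσ ⟨x, hx⟩ ▸ (σ ⟨x, hx⟩).2
  · ext w
    exact (hσ w).symm

lemma localGroup_mono (hHK : H ≤ K) (v : V) : localGroup Γ H v ≤ localGroup Γ K v :=
  fun _ ⟨g, hg, hgv, hσ⟩ => ⟨g, hHK hg, hgv, hσ⟩

lemma IsPGroup.localGroup {p : ℕ} (hH : IsPGroup p H) (v : V) :
    IsPGroup p (localGroup Γ H v) := by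
  rintro ⟨σ, hσ⟩
  obtain ⟨g, hg, -, h, rfl⟩ := mem_localGroup_iff.1 hσ
  obtain ⟨n, hn⟩ := hH ⟨g, hg⟩
  have hgn : g ^ p ^ n = 1 := by simpa using congrArg Subtype.val hn
  refine ⟨n, Subtype.ext ?_⟩
  ext w
  simp [hgn]

lemma inv_mul_mul_mem_localGroup (hHK : ∀ g ∈ H, g v = v → ∀ x ∈ K, g⁻¹ * x * g ∈ K)
    {σ τ : Perm {w : V // Γ.Adj v w}} (hσ : σ ∈ localGroup Γ H v)
    (hτ : τ ∈ localGroup Γ K v) : σ⁻¹ * τ * σ ∈ localGroup Γ K v := by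
  obtain ⟨g, hg, hgv, -, rfl⟩ := mem_localGroup_iff.1 hσ
  obtain ⟨x, hx, hxv, -, rfl⟩ := mem_localGroup_iff.1 hτ
  have hgv' : g.symm v = v := g.symm_apply_eq.2 hgv.symm
  exact ⟨g⁻¹ * x * g, hHK g hg hgv x hx, by simp [hgv, hxv, hgv'], fun _ => rfl⟩

end localGroup

namespace VTPair

variable (P : VTPair) {a b : P.V} {g : Perm P.V}

lemma mem_fix1 {x : Perm P.V} :
    x ∈ fix1 P a ↔ x ∈ P.G ∧ x a = a ∧ ∀ w, P.Γ.Adj a w → x w = w := by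
  simp only [fix1, Subgroup.mem_inf, Subgroup.mem_iInf, MulAction.mem_stabilizer_iff,
    Perm.smul_def, Subtype.forall, and_assoc]

lemma fix1_le_inf_stabilizer (hab : P.Γ.Adj a b) :
    fix1 P a ≤ P.G ⊓ MulAction.stabilizer (Perm P.V) b := fun _ hx =>
  have ⟨hxG, _, hxw⟩ := P.mem_fix1.1 hx
  Subgroup.mem_inf.2 ⟨hxG, hxw b hab⟩

lemma adj_apply_iff (hg : g ∈ P.G) (hga : g a = a) (w : P.V) :
    P.Γ.Adj a (g w) ↔ P.Γ.Adj a w := by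
  simpa [hga] using P.adj_iff g hg a w

lemma exists_mem_apply_eq_apply_eq
    (hloc : ∀ v : P.V, IsTransitivePermGroup (localGroup P.Γ P.G v))
    {c d : P.V} (hab : P.Γ.Adj a b) (hcd : P.Γ.Adj c d) :
    ∃ g ∈ P.G, g a = c ∧ g b = d := by
  obtain ⟨g₁, hg₁, rfl⟩ := P.vtrans a c
  obtain ⟨σ, hσ, hσb⟩ := hloc (g₁ a) ⟨g₁ b, (P.adj_iff g₁ hg₁ a b).2 hab⟩ ⟨d, hcd⟩
  obtain ⟨g₂, hg₂, hg₂a, hσ⟩ := hσ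
  refine ⟨g₂ * g₁, P.G.mul_mem hg₂ hg₁, hg₂a, ?_⟩
  simpa [hσb] using (hσ ⟨g₁ b, (P.adj_iff g₁ hg₁ a b).2 hab⟩).symm

lemma conj_mem_fix1 (hg : g ∈ P.G) {x : Perm P.V} (hx : x ∈ fix1 P a) :
    g * x * g⁻¹ ∈ fix1 P (g a) := by
  obtain ⟨hxG, hxa, hxw⟩ := P.mem_fix1.1 hx
  refine P.mem_fix1.2 ⟨P.G.mul_mem (P.G.mul_mem hg hxG) (P.G.inv_mem hg), by simp [hxa],
    fun w hw => ?_⟩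
  have hw' : P.Γ.Adj a (g⁻¹ w) := (P.adj_iff g hg _ _).1 (by simpa using hw)
  rw [Perm.mul_apply, Perm.mul_apply, hxw _ hw']
  exact g.apply_symm_apply w

lemma map_conj_fix1 (hg : g ∈ P.G) (a : P.V) :
    (fix1 P a).map (MulAut.conj g) = fix1 P (g a) := by
  refine le_antisymm (Subgroup.map_le_iff_le_comap.2 fun x hx => P.conj_mem_fix1 hg hx)
    fun x hx => ⟨g⁻¹ * x * g, ?_, by simp [mul_assoc]⟩
  simpa using P.conj_mem_fix1 (P.G.inv_mem hg) hx

lemma map_conj_pCore_fix1_le {p : ℕ} (hg : g ∈ P.G) (a : P.V) :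
    (Subgroup.pCore p (fix1 P a)).map (MulAut.conj g) ≤
      Subgroup.pCore p (fix1 P (g a)) :=
  P.map_conj_fix1 hg a ▸ Subgroup.map_pCore_le _ _

lemma inv_mul_mul_mem_pCore_fix1 {p : ℕ} (hg : g ∈ P.G) (hga : g a = a) {x : Perm P.V}
    (hx : x ∈ Subgroup.pCore p (fix1 P a)) : g⁻¹ * x * g ∈ Subgroup.pCore p (fix1 P a) := by
  have hga' : g⁻¹ a = a := by rw [Perm.inv_eq_iff_eq, hga]
  simpa [hga'] using P.map_conj_pCore_fix1_le (P.G.inv_mem hg) a (Subgroup.mem_map_of_mem _ hx)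

lemma le_fix1_of_localGroup_eq_bot {K : Subgroup (Perm P.V)}
    (hK : K ≤ P.G ⊓ MulAction.stabilizer (Perm P.V) a) (hbot : localGroup P.Γ K a = ⊥) :
    K ≤ fix1 P a := by
  intro x hx
  obtain ⟨hxG, hxa⟩ := Subgroup.mem_inf.1 (hK hx)
  have hxa : x a = a := hxa
  have hrestr := mem_localGroup_iff.2 ⟨x, hx, hxa, P.adj_apply_iff hxG hxa, rfl⟩
  rw [hbot, Subgroup.mem_bot] at hrestr
  exact P.mem_fix1.2 ⟨hxG, hxa, fun w hw => congrArg Subtype.val (Perm.ext_iff.1 hrestr ⟨w, hw⟩)⟩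

lemma fix1_inf_fix1_le_pCore {p : ℕ} (hab : P.Γ.Adj a b)
    (hp : IsPGroup p ↥(fix1 P a ⊓ fix1 P b)) :
    fix1 P a ⊓ fix1 P b ≤ Subgroup.pCore p (fix1 P a) := by
  refine Subgroup.le_pCore inf_le_left hp ((le_inf Subgroup.le_normalizer fun x hx => ?_).trans
    Subgroup.inf_normalizer_le_normalizer_inf)
  obtain ⟨hxG, -, hxw⟩ := P.mem_fix1.1 hx
  rw [Subgroup.mem_normalizer_iff_map_conj_eq, P.map_conj_fix1 hxG, hxw b hab]

lemma isPGroup_fix1_inf_fix1 {p : ℕ}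
    (hloc : ∀ v : P.V, IsTransitivePermGroup (localGroup P.Γ P.G v))
    {c d : P.V} (hcd : P.Γ.Adj c d) (hp : IsPGroup p ↥(fix1 P c ⊓ fix1 P d))
    (hab : P.Γ.Adj a b) : IsPGroup p ↥(fix1 P a ⊓ fix1 P b) := by
  obtain ⟨g, hg, rfl, rfl⟩ := P.exists_mem_apply_eq_apply_eq hloc hcd hab
  rw [← P.map_conj_fix1 hg, ← P.map_conj_fix1 hg,
    ← Subgroup.map_inf_eq _ _ _ (MulAut.conj g).injective]
  exact hp.map _

lemma pCore_fix1_le_fix1 {p : ℕ}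
    (hloc : ∀ v : P.V, IsTransitivePermGroup (localGroup P.Γ P.G v))
    {c d : P.V} (hcd : P.Γ.Adj c d) (hle : Subgroup.pCore p (fix1 P c) ≤ fix1 P d)
    (hab : P.Γ.Adj a b) : Subgroup.pCore p (fix1 P a) ≤ fix1 P b := by
  obtain ⟨g, hg, rfl, rfl⟩ := P.exists_mem_apply_eq_apply_eq hloc hab hcd
  rw [← Subgroup.map_le_map_iff_of_injective (f := (MulAut.conj g : Perm P.V →* Perm P.V))
    (MulAut.conj g).injective, P.map_conj_fix1 hg]
  exact (P.map_conj_pCore_fix1_le hg a).trans hle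

lemma fix1_inf_fix1_eq_bot {p : ℕ}
    (hle : ∀ a b, P.Γ.Adj a b → Subgroup.pCore p (fix1 P a) ≤ fix1 P b)
    (hp : ∀ a b, P.Γ.Adj a b → IsPGroup p ↥(fix1 P a ⊓ fix1 P b)) (hab : P.Γ.Adj a b) :
    fix1 P a ⊓ fix1 P b = ⊥ := by
  have hcore : ∀ a b, P.Γ.Adj a b → Subgroup.pCore p (fix1 P a) = fix1 P a ⊓ fix1 P b :=
    fun a b hab => le_antisymm (le_inf (Subgroup.pCore_le _) (hle a b hab))
      (P.fix1_inf_fix1_le_pCore hab (hp a b hab))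
  have hconst : ∀ c, Subgroup.pCore p (fix1 P c) = Subgroup.pCore p (fix1 P a) :=
    fun c => P.conn.preconnected.eq_of_forall_adj (f := fun c => Subgroup.pCore p (fix1 P c))
      (fun c d hcd => by rw [hcore c d hcd, hcore d c hcd.symm, inf_comm]) c a
  rw [← hcore a b hab, Subgroup.eq_bot_iff_forall]
  intro x hx
  ext c
  exact (P.mem_fix1.1 (Subgroup.pCore_le _ ((hconst c).symm ▸ hx))).2.1

end VTPair

theorem Op_ne_one_of_arc_kernel_pGroup_general (P : VTPair)
    (hloc : ∀ v : P.V, IsTransitivePermGroup (localGroup P.Γ P.G v))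
    (u v : P.V) (huv : P.Γ.Adj u v) (p : ℕ)
    (hpgrp : IsPGroup p ↥(fix1 P u ⊓ fix1 P v))
    (hnt : fix1 P u ⊓ fix1 P v ≠ ⊥) :
    ∃ Q : Subgroup (Equiv.Perm {w : P.V // P.Γ.Adj u w}),
      Q ≠ ⊥ ∧ IsPGroup p ↥Q ∧
      Q ≤ localGroup P.Γ (P.G ⊓ MulAction.stabilizer (Equiv.Perm P.V) v) u ∧
      ∀ g ∈ localGroup P.Γ (P.G ⊓ MulAction.stabilizer (Equiv.Perm P.V) v) u,
        ∀ q ∈ Q, g⁻¹ * q * g ∈ Q := by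
  refine ⟨localGroup P.Γ (Subgroup.pCore p (fix1 P v)) u, fun hbot => hnt ?_,
    (Subgroup.isPGroup_pCore _).localGroup u,
    localGroup_mono ((Subgroup.pCore_le _).trans inf_le_left) u,
    fun σ hσ τ hτ => inv_mul_mul_mem_localGroup (fun g hg _ _ hx =>
      P.inv_mul_mul_mem_pCore_fix1 (Subgroup.mem_inf.1 hg).1 (Subgroup.mem_inf.1 hg).2 hx) hσ hτ⟩
  have hvu := P.le_fix1_of_localGroup_eq_bot
    ((Subgroup.pCore_le _).trans (P.fix1_le_inf_stabilizer huv.symm)) hbot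
  exact P.fix1_inf_fix1_eq_bot (fun a b hab => P.pCore_fix1_le_fix1 hloc huv.symm hvu hab)
    (fun a b hab => P.isPGroup_fix1_inf_fix1 hloc huv hpgrp hab) huv

/-- **Lemma.** Let `(Γ,G)` be a locally-transitive pair and `(u,v)` an arc of `Γ`. If
`G_{uv}^{[1]}` is a non-trivial `p`-group, then `O_p(G_{uv}^{Γ(u)}) ≠ 1`, i.e. the
permutation group induced by `G_{uv}` on `Γ(u)` has a non-trivial normal `p`-subgroup. -/
theorem Op_ne_one_of_arc_kernel_pGroup (P : VTPair)
    (hloc : ∀ v : P.V, IsTransitivePermGroup (localGroup P.Γ P.G v))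
    (u v : P.V) (huv : P.Γ.Adj u v) (p : ℕ) (hp : p.Prime)
    (hpgrp : IsPGroup p ↥(fix1 P u ⊓ fix1 P v))
    (hnt : fix1 P u ⊓ fix1 P v ≠ ⊥) :
    ∃ Q : Subgroup (Equiv.Perm {w : P.V // P.Γ.Adj u w}),
      Q ≠ ⊥ ∧ IsPGroup p ↥Q ∧
      Q ≤ localGroup P.Γ (P.G ⊓ MulAction.stabilizer (Equiv.Perm P.V) v) u ∧
      ∀ g ∈ localGroup P.Γ (P.G ⊓ MulAction.stabilizer (Equiv.Perm P.V) v) u,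
        ∀ q ∈ Q, g⁻¹ * q * g ∈ Q :=
  Op_ne_one_of_arc_kernel_pGroup_general P hloc u v huv p hpgrp hnt
end
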